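/- Let H be a real Hilbert space and X ⊆ H a nonempty closed convex set of diameter at most D, with P_X the metric projection onto X. Let n ≥ 1, W an n×n symmetric doubly stochastic matrix with σ₂ := the operator norm of W − (1/n)𝟙𝟙ᵀ satisfying σ₂ < 1, and ρ := 1 − (1 − σ₂)/4. Let T ≥ 1, η > 0, L ≥ 0, and for each i ∈ {1,…,n} and t ∈ {1,…,T} let f_{i,t} : H → ℝ be convex and L-Lipschitz on X; set f_t := (1/n)∑_{i=1}^n f_{i,t}. Run the algorithm: x_{i,1} = x₁ ∈ X for all i; g_{i,t} is a subgradient of f_{i,t} at x_{i,t} on X (i.e., f_{i,t}(y) ≥ f_{i,t}(x_{i,t}) + ⟨g_{i,t}, y − x_{i,t}⟩ for all y ∈ X) with ‖g_{i,t}‖ ≤ L; y_{i,t+1} = P_X(x_{i,t} − η g_{i,t}); x_{i,t+1} = y_{i,t+1} + (1/2)∑_{j=1}^n W i j (y_{j,t+1} − y_{i,t+1}). Then for every x* ∈ X: (1/n)∑_{t=1}^T ∑_{i=1}^n f_t(x_{i,t}) − ∑_{t=1}^T f_t(x*) ≤ D²/(2η) + η T L² (4√n/(1 − ρ) + 1/2).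 -/

import Mathlib

/-
Each agent performs a projected subgradient step, so
`2η⟪g, x - x⋆⟫ ≤ ‖x - x⋆‖² - ‖y - x⋆‖² + η²L²`, and the doubly stochastic consensus step
`x = ((I + W)/2) y` does not increase `∑ᵢ ‖xᵢ - x⋆‖²`; summed over agents and rounds these
telescope to `D²/(2η) + ηTL²/2`. Evaluating `f_{j,t}` at `x_{i,t}` instead of at `x_{j,t}` costs
`L ‖x_{i,t} - x_{j,t}‖`. Since `‖(I + W)/2 - J/n‖ ≤ (1 + σ₂)/2 ≤ ρ` (as `I - J/n` is an orthogonal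
projection), consensus contracts the `ℓ²` deviation of the agents from their mean by `ρ`,
while a gradient step moves each agent by at most `ηL`; so the deviation stays below
`√n ηL/(1 - ρ)` and any two agents are within `2√n ηL/(1 - ρ)`. This yields the bound even with
`2√n` in place of `4√n`.
-/

open scoped BigOperators RealInnerProductSpace

/-- `σ₂(W)`: the operator norm of `W − (1/n)𝟙𝟙ᵀ` acting on Euclidean `n`-space. -/
noncomputable def sigma2 {n : ℕ} (W : Matrix (Fin n) (Fin n) ℝ) : ℝ :=
  ‖(Matrix.toEuclideanCLM (𝕜 := ℝ) (W - (n : ℝ)⁻¹ • Matrix.of fun _ _ => (1 : ℝ)) :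
      EuclideanSpace ℝ (Fin n) →L[ℝ] EuclideanSpace ℝ (Fin n))‖

open Finset Matrix
open scoped Matrix.Norms.L2Operator

section NormedGroup

variable {E : Type*} [SeminormedAddCommGroup E]

theorem sqrt_sum_norm_add_sq_le {ι : Type*} [Fintype ι] (a b : ι → E) :
    √(∑ i, ‖a i + b i‖ ^ 2) ≤ √(∑ i, ‖a i‖ ^ 2) + √(∑ i, ‖b i‖ ^ 2) := by
  simpa only [PiLp.norm_eq_of_L2, WithLp.ofLp_add, Pi.add_apply] using
    norm_add_le (WithLp.toLp 2 a : PiLp 2 fun _ : ι => E) (WithLp.toLp 2 b)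

theorem sqrt_sum_norm_sq_le {ι : Type*} [Fintype ι] {v : ι → E} {B : ℝ} (hB : 0 ≤ B)
    (hv : ∀ i, ‖v i‖ ≤ B) : √(∑ i, ‖v i‖ ^ 2) ≤ √(Fintype.card ι) * B := by
  rw [← Real.sqrt_sq hB, ← Real.sqrt_mul (Nat.cast_nonneg _)]
  refine Real.sqrt_le_sqrt ?_
  calc ∑ i, ‖v i‖ ^ 2 ≤ ∑ _i : ι, B ^ 2 := by
        gcongr with i
        exact hv i
    _ = _ := by simp

theorem norm_sub_le_of_sqrt_sum_norm_sub_sq_le {ι : Type*} [Fintype ι] {v : ι → E} {c : E}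
    {K : ℝ} (hK : √(∑ k, ‖v k - c‖ ^ 2) ≤ K) (i j : ι) : ‖v i - v j‖ ≤ 2 * K := by
  have hle : ∀ k, ‖v k - c‖ ≤ K := fun k => by
    refine le_trans ?_ hK
    rw [← Real.sqrt_sq (norm_nonneg (v k - c))]
    exact Real.sqrt_le_sqrt
      (single_le_sum (f := fun k => ‖v k - c‖ ^ 2) (fun k _ => sq_nonneg _) (mem_univ k))
  calc ‖v i - v j‖ ≤ ‖v i - c‖ + ‖v j - c‖ :=
        (norm_sub_le_norm_sub_add_norm_sub _ c _).trans_eq (by rw [norm_sub_rev c])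
    _ ≤ 2 * K := by linarith [hle i, hle j]

end NormedGroup

section InnerProduct

variable {H : Type*} [NormedAddCommGroup H] [InnerProductSpace ℝ H]

theorem norm_sub_sq_le_of_isMinOn {X : Set H} (hX : Convex ℝ X) {z p w : H} (hp : p ∈ X)
    (hmin : IsMinOn (fun w => ‖w - z‖) X p) (hw : w ∈ X) : ‖p - w‖ ^ 2 ≤ ‖z - w‖ ^ 2 := by
  have : Nonempty X := ⟨⟨p, hp⟩⟩
  have hinf : ‖z - p‖ = ⨅ w : X, ‖z - w‖ := by
    have hbdd : BddBelow (Set.range fun w : X => ‖z - w‖) := ⟨0, by rintro _ ⟨w, rfl⟩; positivity⟩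
    refine le_antisymm (le_ciInf fun w => ?_) (ciInf_le hbdd ⟨p, hp⟩)
    simpa only [norm_sub_rev z] using isMinOn_iff.1 hmin w w.2
  have hvi : ⟪z - p, w - p⟫ ≤ 0 := (norm_eq_iInf_iff_real_inner_le_zero hX hp).1 hinf w hw
  have hexp : ‖z - w‖ ^ 2 = ‖z - p‖ ^ 2 - 2 * ⟪z - p, w - p⟫ + ‖w - p‖ ^ 2 := by
    rw [← norm_sub_sq_real, sub_sub_sub_cancel_right]
  rw [hexp, norm_sub_rev]
  nlinarith [sq_nonneg ‖z - p‖]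

theorem norm_sub_le_of_isMinOn {X : Set H} (hX : Convex ℝ X) {z p w : H} (hp : p ∈ X)
    (hmin : IsMinOn (fun w => ‖w - z‖) X p) (hw : w ∈ X) : ‖p - w‖ ≤ ‖z - w‖ :=
  (pow_le_pow_iff_left₀ (norm_nonneg _) (norm_nonneg _) two_ne_zero).1
    (norm_sub_sq_le_of_isMinOn hX hp hmin hw)

theorem norm_sub_le_of_isMinOn_sub_smul {X : Set H} (hX : Convex ℝ X) {x g y : H} {η L : ℝ}
    (hη : 0 ≤ η) (hy : y ∈ X) (hmin : IsMinOn (fun w => ‖w - (x - η • g)‖) X y) (hx : x ∈ X)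
    (hg : ‖g‖ ≤ L) : ‖y - x‖ ≤ η * L :=
  calc ‖y - x‖ ≤ ‖x - η • g - x‖ := norm_sub_le_of_isMinOn hX hy hmin hx
    _ = η * ‖g‖ := by rw [sub_sub_cancel_left, norm_neg, norm_smul, Real.norm_of_nonneg hη]
    _ ≤ η * L := by gcongr

theorem two_mul_inner_le_of_isMinOn {X : Set H} (hX : Convex ℝ X) {x g y xstar : H} {η : ℝ}
    (hy : y ∈ X) (hmin : IsMinOn (fun w => ‖w - (x - η • g)‖) X y) (hxstar : xstar ∈ X) :
    2 * η * ⟪g, x - xstar⟫ ≤ ‖x - xstar‖ ^ 2 - ‖y - xstar‖ ^ 2 + η ^ 2 * ‖g‖ ^ 2 := by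
  have h := norm_sub_sq_le_of_isMinOn hX hy hmin hxstar
  rw [show x - η • g - xstar = (x - xstar) - η • g by abel, norm_sub_sq_real (x - xstar),
    real_inner_smul_right, norm_smul, mul_pow, Real.norm_eq_abs, sq_abs,
    real_inner_comm] at h
  linarith

theorem sum_norm_sum_smul_sq_le {m n : Type*} [Fintype m] [Fintype n] [DecidableEq n]
    (A : Matrix m n ℝ) (v : n → H) :
    ∑ i, ‖∑ j, A i j • v j‖ ^ 2 ≤ ‖A‖ ^ 2 * ∑ j, ‖v j‖ ^ 2 := by
  set V := Submodule.span ℝ (Set.range v)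
  have : FiniteDimensional ℝ V := FiniteDimensional.span_of_finite ℝ (Set.finite_range v)
  let b := stdOrthonormalBasis ℝ V
  have parseval : ∀ w ∈ V, ‖w‖ ^ 2 = ∑ k, ⟪(b k : H), w⟫ ^ 2 := fun w hw =>
    (b.sum_sq_inner_right ⟨w, hw⟩).symm
  have hv : ∀ j, v j ∈ V := fun j => Submodule.subset_span (Set.mem_range_self j)
  -- Parseval in the finite-dimensional span of the `v j` reduces to `‖A‖` acting on the
  -- coordinate vectors `u k = (⟪b k, v j⟫)_j`.
  let u : _ → EuclideanSpace ℝ n := fun k => WithLp.toLp 2 fun j => ⟪(b k : H), v j⟫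
  calc ∑ i, ‖∑ j, A i j • v j‖ ^ 2
      = ∑ k, ‖(EuclideanSpace.equiv m ℝ).symm (A *ᵥ u k)‖ ^ 2 := by
        simp_rw [EuclideanSpace.norm_sq_eq]
        rw [Finset.sum_comm]
        refine sum_congr rfl fun i _ => ?_
        rw [parseval _ (V.sum_mem fun j _ => V.smul_mem _ (hv j))]
        simp [u, inner_sum, inner_smul_right, mulVec, dotProduct]
    _ ≤ ∑ k, (‖A‖ * ‖u k‖) ^ 2 := by
        gcongr with k
        exact A.l2_opNorm_mulVec (u k)
    _ = ‖A‖ ^ 2 * ∑ j, ‖v j‖ ^ 2 := by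
        simp_rw [mul_pow, ← mul_sum, EuclideanSpace.norm_sq_eq, parseval _ (hv _)]
        rw [Finset.sum_comm]
        simp [u]

theorem sum_norm_sum_smul_sub_sq_le {ι : Type*} [Fintype ι] [DecidableEq ι]
    {M : Matrix ι ι ℝ} (hM : M ∈ doublyStochastic ℝ ι) (y : ι → H) (c : H) :
    ∑ i, ‖∑ j, M i j • y j - c‖ ^ 2 ≤ ∑ j, ‖y j - c‖ ^ 2 := by
  have hrow (i : ι) : ∑ j, M i j • y j - c = ∑ j, M i j • (y j - c) := by
    simp only [smul_sub, sum_sub_distrib, ← sum_smul, sum_row_of_mem_doublyStochastic hM,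
      one_smul]
  have hM1 : ‖M‖ ^ 2 ≤ 1 :=
    pow_le_one₀ (norm_nonneg M) (l2_opNorm_le_one_of_mem_doublyStochastic hM)
  simp_rw [hrow]
  exact (sum_norm_sum_smul_sq_le M _).trans
    (mul_le_of_le_one_left (sum_nonneg fun _ _ => sq_nonneg _) hM1)

section Consensus

variable {n : ℕ}

noncomputable def averagingMatrix (n : ℕ) : Matrix (Fin n) (Fin n) ℝ := (n : ℝ)⁻¹ • of fun _ _ => 1

theorem sigma2_eq_norm_sub_averagingMatrix (W : Matrix (Fin n) (Fin n) ℝ) :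
    sigma2 W = ‖W - averagingMatrix n‖ := rfl

theorem isStarProjection_averagingMatrix (hn : n ≠ 0) :
    IsStarProjection (averagingMatrix n) := by
  refine ⟨?_, ?_⟩
  · ext i j
    simp only [averagingMatrix, smul_of, Matrix.mul_apply, of_apply, Pi.smul_apply, smul_eq_mul,
      mul_one, sum_const, card_univ, Fintype.card_fin, nsmul_eq_mul, Matrix.smul_apply]
    field_simp
  · ext i j
    simp [averagingMatrix]

theorem sum_norm_sum_smul_sub_mean_sq_le {A : Matrix (Fin n) (Fin n) ℝ}
    (hA : ∀ i, ∑ j, A i j = 1) (y : Fin n → H) (c : H) :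
    ∑ i, ‖∑ j, A i j • y j - (n : ℝ)⁻¹ • ∑ j, y j‖ ^ 2 ≤
      ‖A - averagingMatrix n‖ ^ 2 * ∑ j, ‖y j - c‖ ^ 2 := by
  have hdev (i : Fin n) : ∑ j, A i j • y j - (n : ℝ)⁻¹ • ∑ j, y j =
      ∑ j, (A - averagingMatrix n) i j • (y j - c) := by
    have hn : (n : ℝ) ≠ 0 := by exact_mod_cast (Fin.pos i).ne'
    simp [averagingMatrix, sub_smul, smul_sub, sum_sub_distrib, ← sum_smul, hA i, ← smul_sum,
      ← Nat.cast_smul_eq_nsmul ℝ, smul_smul, mul_inv_cancel₀ hn]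
  simp_rw [hdev]
  exact sum_norm_sum_smul_sq_le _ _

noncomputable def consensusMatrix {ι : Type*} [DecidableEq ι] (W : Matrix ι ι ℝ) :
    Matrix ι ι ℝ :=
  (2 : ℝ)⁻¹ • (1 + W)

theorem consensusMatrix_mem_doublyStochastic {ι : Type*} [Fintype ι] [DecidableEq ι]
    {W : Matrix ι ι ℝ} (hW : W ∈ doublyStochastic ℝ ι) :
    consensusMatrix W ∈ doublyStochastic ℝ ι := by
  simpa only [consensusMatrix, smul_add, SetLike.mem_coe] using
    convex_doublyStochastic (one_mem _) hW (by norm_num) (by norm_num) (by norm_num)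

theorem add_inv_two_smul_sum_eq_sum_consensusMatrix {ι : Type*} [Fintype ι] [DecidableEq ι]
    {W : Matrix ι ι ℝ} {i : ι} (hrow : ∑ j, W i j = 1) (y : ι → H) :
    y i + (2 : ℝ)⁻¹ • ∑ j, W i j • (y j - y i) = ∑ j, consensusMatrix W i j • y j := by
  simp only [smul_sub, sum_sub_distrib, ← sum_smul, hrow, one_smul, consensusMatrix,
    Matrix.smul_apply, Matrix.add_apply, Matrix.one_apply, smul_eq_mul, mul_smul, add_smul,
    ite_smul, zero_smul, smul_add, smul_ite, smul_zero, sum_add_distrib, sum_ite_eq, mem_univ,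
    if_true, ← smul_sum]
  module

theorem norm_consensusMatrix_sub_averagingMatrix_le (hn : n ≠ 0) (W : Matrix (Fin n) (Fin n) ℝ) :
    ‖consensusMatrix W - averagingMatrix n‖ ≤ (1 + sigma2 W) / 2 := by
  have hsplit : consensusMatrix W - averagingMatrix n =
      (2 : ℝ)⁻¹ • (1 - averagingMatrix n) + (2 : ℝ)⁻¹ • (W - averagingMatrix n) := by
    simp only [consensusMatrix]
    module
  have hproj : ‖1 - averagingMatrix n‖ ≤ 1 :=
    (isStarProjection_averagingMatrix hn).one_sub.norm_le
  rw [hsplit, sigma2_eq_norm_sub_averagingMatrix]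
  refine (norm_add_le _ _).trans ?_
  rw [norm_smul, norm_smul, Real.norm_of_nonneg (by norm_num)]
  linarith

theorem iterate_mem {X : Set H} {M : Matrix (Fin n) (Fin n) ℝ} {x y : Fin n → ℕ → H} {T : ℕ}
    (hX : Convex ℝ X) (hM : M ∈ doublyStochastic ℝ (Fin n)) (hx₁ : ∀ i, x i 1 ∈ X)
    (hy : ∀ i, ∀ t ∈ Icc 1 T, y i (t + 1) ∈ X)
    (hcons : ∀ i, ∀ t ∈ Icc 1 T, x i (t + 1) = ∑ j, M i j • y j (t + 1)) :
    ∀ t ∈ Icc 1 T, ∀ i, x i t ∈ X := by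
  intro t ht i
  obtain ⟨ht1, htT⟩ := mem_Icc.1 ht
  obtain ⟨s, rfl⟩ : ∃ s, t = s + 1 := ⟨t - 1, by omega⟩
  rcases Nat.eq_zero_or_pos s with rfl | hs
  · exact hx₁ i
  · have hs' : s ∈ Icc 1 T := mem_Icc.2 ⟨hs, by omega⟩
    rw [hcons i s hs']
    exact hX.sum_mem (fun j _ => nonneg_of_mem_doublyStochastic hM)
      (sum_row_of_mem_doublyStochastic hM i) fun j _ => hy j s hs'

theorem exists_sqrt_sum_norm_sub_sq_le {M : Matrix (Fin n) (Fin n) ℝ} {x y : Fin n → ℕ → H}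
    {T : ℕ} {x₁ : H} {B ρ : ℝ} (hB : 0 ≤ B) (hρ : ρ < 1)
    (hMρ : ‖M - averagingMatrix n‖ ≤ ρ) (hM : ∀ i, ∑ j, M i j = 1) (hx₁ : ∀ i, x i 1 = x₁)
    (hstep : ∀ i, ∀ t ∈ Icc 1 T, ‖y i (t + 1) - x i t‖ ≤ B)
    (hcons : ∀ i, ∀ t ∈ Icc 1 T, x i (t + 1) = ∑ j, M i j • y j (t + 1)) :
    ∀ t ∈ Icc 1 T, ∃ c, √(∑ i, ‖x i t - c‖ ^ 2) ≤ √n * B / (1 - ρ) := by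
  have hρ0 : 0 ≤ ρ := (norm_nonneg _).trans hMρ
  set K := √n * B / (1 - ρ) with hK
  have hK0 : 0 ≤ K := div_nonneg (by positivity) (by linarith)
  have hKρ : (1 - ρ) * K = √n * B := by
    rw [hK]
    field_simp [(by linarith : 1 - ρ ≠ 0)]
  intro t ht
  obtain ⟨ht1, htT⟩ := mem_Icc.1 ht
  induction t, ht1 using Nat.le_induction with
  | base => exact ⟨x₁, by simpa [hx₁] using hK0⟩
  | succ t ht1 ih =>
    have ht : t ∈ Icc 1 T := mem_Icc.2 ⟨ht1, by omega⟩
    obtain ⟨c, hc⟩ := ih ht (by omega)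
    refine ⟨(n : ℝ)⁻¹ • ∑ j, y j (t + 1), ?_⟩
    have hx (i) : x i (t + 1) = ∑ j, M i j • y j (t + 1) := hcons i t ht
    have hsq := sum_norm_sum_smul_sub_mean_sq_le hM (fun j => y j (t + 1)) c
    have hρsq : ‖M - averagingMatrix n‖ ^ 2 ≤ ρ ^ 2 := by gcongr
    calc √(∑ i, ‖x i (t + 1) - (n : ℝ)⁻¹ • ∑ j, y j (t + 1)‖ ^ 2)
        ≤ ρ * √(∑ j, ‖y j (t + 1) - c‖ ^ 2) := by
          simp_rw [hx]
          refine (Real.sqrt_le_sqrt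
            (hsq.trans (mul_le_mul_of_nonneg_right hρsq (by positivity)))).trans_eq ?_
          rw [Real.sqrt_mul (sq_nonneg _), Real.sqrt_sq hρ0]
      _ ≤ ρ * (√(∑ j, ‖x j t - c‖ ^ 2) + √(∑ j, ‖y j (t + 1) - x j t‖ ^ 2)) := by
          gcongr
          simpa using sqrt_sum_norm_add_sq_le (fun j => x j t - c) (fun j => y j (t + 1) - x j t)
      _ ≤ ρ * (K + √n * B) := by
          gcongr
          simpa using sqrt_sum_norm_sq_le hB fun j => hstep j t ht
      _ ≤ K := by nlinarith [mul_nonneg (sub_nonneg.2 hρ.le) (by positivity : 0 ≤ √n * B)]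

end Consensus

theorem avg_regret_le {n : ℕ} (hn : 0 < n) {X : Set H} (hX : Convex ℝ X) {f : Fin n → H → ℝ}
    {x y g : Fin n → H} {xstar : H} {η L δ : ℝ} (hη : 0 < η) (hL : 0 ≤ L)
    (hx : ∀ i, x i ∈ X) (hxstar : xstar ∈ X)
    (hlip : ∀ j, ∀ a ∈ X, ∀ b ∈ X, |f j a - f j b| ≤ L * ‖a - b‖)
    (hsub : ∀ j, ∀ w ∈ X, f j w ≥ f j (x j) + ⟪g j, w - x j⟫) (hg : ∀ j, ‖g j‖ ≤ L)
    (hy : ∀ j, y j ∈ X ∧ IsMinOn (fun w => ‖w - (x j - η • g j)‖) X (y j))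
    (hδ : ∀ i j, ‖x i - x j‖ ≤ δ) :
    (n : ℝ)⁻¹ * ∑ i, ((n : ℝ)⁻¹ * ∑ j, f j (x i)) - (n : ℝ)⁻¹ * ∑ j, f j xstar ≤
      L * δ + η * L ^ 2 / 2 +
        (∑ j, ‖x j - xstar‖ ^ 2 - ∑ j, ‖y j - xstar‖ ^ 2) / (2 * η * n) := by
  have hn' : (0 : ℝ) < n := by exact_mod_cast hn
  have key (i j : Fin n) : f j (x i) - f j xstar ≤
      L * δ + η * L ^ 2 / 2 + (‖x j - xstar‖ ^ 2 - ‖y j - xstar‖ ^ 2) / (2 * η) := by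
    have hlipij : f j (x i) - f j (x j) ≤ L * δ :=
      (le_abs_self _).trans ((hlip j _ (hx i) _ (hx j)).trans (by gcongr; exact hδ i j))
    have hsubj : f j (x j) - f j xstar ≤ ⟪g j, x j - xstar⟫ := by
      have := hsub j xstar hxstar
      rw [← neg_sub, inner_neg_right] at this
      linarith
    have hstep := two_mul_inner_le_of_isMinOn hX (hy j).1 (hy j).2 hxstar
    have hgL : η ^ 2 * ‖g j‖ ^ 2 ≤ η ^ 2 * L ^ 2 := by gcongr; exact hg j
    have hinner : ⟪g j, x j - xstar⟫ ≤
        η * L ^ 2 / 2 + (‖x j - xstar‖ ^ 2 - ‖y j - xstar‖ ^ 2) / (2 * η) := by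
      have e : η * L ^ 2 / 2 + (‖x j - xstar‖ ^ 2 - ‖y j - xstar‖ ^ 2) / (2 * η) =
          (‖x j - xstar‖ ^ 2 - ‖y j - xstar‖ ^ 2 + η ^ 2 * L ^ 2) / (2 * η) := by
        field_simp
        ring
      rw [e, le_div_iff₀ (by positivity)]
      linarith
    linarith
  calc (n : ℝ)⁻¹ * ∑ i, ((n : ℝ)⁻¹ * ∑ j, f j (x i)) - (n : ℝ)⁻¹ * ∑ j, f j xstar
      = (n : ℝ)⁻¹ * ∑ i, ((n : ℝ)⁻¹ * ∑ j, (f j (x i) - f j xstar)) := by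
        simp only [sum_sub_distrib, mul_sub, sum_const, card_univ, Fintype.card_fin, nsmul_eq_mul,
          inv_mul_cancel_left₀ hn'.ne']
    _ ≤ (n : ℝ)⁻¹ * ∑ _i : Fin n, ((n : ℝ)⁻¹ * ∑ j, (L * δ + η * L ^ 2 / 2 +
          (‖x j - xstar‖ ^ 2 - ‖y j - xstar‖ ^ 2) / (2 * η))) := by
        gcongr with i _ j
        exact key i j
    _ = _ := by
        simp only [sum_add_distrib, sum_sub_distrib, ← sum_div, sum_const, card_univ,
          Fintype.card_fin, nsmul_eq_mul]
        field_simp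

theorem sum_Icc_le_of_le_add_sub_div {r u v : ℕ → ℝ} {a b : ℝ} {T : ℕ} (hb : 0 < b)
    (hr : ∀ t ∈ Icc 1 T, r t ≤ a + (u t - v t) / b) (huv : ∀ t ∈ Icc 1 T, u (t + 1) ≤ v t)
    (hu : 0 ≤ u (T + 1)) :
    ∑ t ∈ Icc 1 T, r t ≤ T * a + u 1 / b := by
  suffices h : ∀ s ≤ T, ∑ t ∈ Icc 1 s, r t ≤ s * a + (u 1 - u (s + 1)) / b by
    refine (h T le_rfl).trans ?_
    rw [sub_div]
    linarith [div_nonneg hu hb.le]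
  intro s hs
  induction s with
  | zero => simp
  | succ s ih =>
    have hs' : s + 1 ∈ Icc 1 T := mem_Icc.2 ⟨by omega, hs⟩
    rw [sum_Icc_succ_top (by omega), Nat.cast_succ]
    have h1 := ih (by omega)
    have h2 := hr _ hs'
    have h3 : (u (s + 1) - v (s + 1)) / b ≤ (u (s + 1) - u (s + 1 + 1)) / b := by
      gcongr
      exact huv _ hs'
    have h4 : (u 1 - u (s + 1)) / b + (u (s + 1) - u (s + 1 + 1)) / b =
        (u 1 - u (s + 1 + 1)) / b := by
      rw [← add_div]; ring_nf
    linarith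

theorem regret_le_of_disagreement_le {n : ℕ} (hn : 0 < n) {X : Set H} (hX : Convex ℝ X)
    {D : ℝ} (hdiam : ∀ a ∈ X, ∀ b ∈ X, ‖a - b‖ ≤ D) {T : ℕ} {η L δ : ℝ} (hη : 0 < η)
    (hL : 0 ≤ L) {f : Fin n → ℕ → H → ℝ} {x y g : Fin n → ℕ → H} {xstar : H}
    (hxstar : xstar ∈ X) (hx₁ : ∀ i, x i 1 ∈ X) (hx : ∀ t ∈ Icc 1 T, ∀ i, x i t ∈ X)
    (hlip : ∀ i, ∀ t ∈ Icc 1 T, ∀ a ∈ X, ∀ b ∈ X, |f i t a - f i t b| ≤ L * ‖a - b‖)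
    (hsub : ∀ i, ∀ t ∈ Icc 1 T, ∀ w ∈ X, f i t w ≥ f i t (x i t) + ⟪g i t, w - x i t⟫)
    (hg : ∀ i, ∀ t ∈ Icc 1 T, ‖g i t‖ ≤ L)
    (hy : ∀ i, ∀ t ∈ Icc 1 T,
      y i (t + 1) ∈ X ∧ IsMinOn (fun w => ‖w - (x i t - η • g i t)‖) X (y i (t + 1)))
    (hδ : ∀ t ∈ Icc 1 T, ∀ i j, ‖x i t - x j t‖ ≤ δ)
    (hmix : ∀ t ∈ Icc 1 T, ∑ i, ‖x i (t + 1) - xstar‖ ^ 2 ≤ ∑ i, ‖y i (t + 1) - xstar‖ ^ 2) :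
    (n : ℝ)⁻¹ * ∑ t ∈ Icc 1 T, ∑ i, ((n : ℝ)⁻¹ * ∑ j, f j t (x i t)) -
        ∑ t ∈ Icc 1 T, ((n : ℝ)⁻¹ * ∑ j, f j t xstar) ≤
      T * (L * δ + η * L ^ 2 / 2) + D ^ 2 / (2 * η) := by
  have hdist₁ : ∑ i, ‖x i 1 - xstar‖ ^ 2 ≤ n * D ^ 2 :=
    calc ∑ i, ‖x i 1 - xstar‖ ^ 2 ≤ ∑ _i : Fin n, D ^ 2 := by
          gcongr with i
          exact hdiam _ (hx₁ i) _ hxstar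
      _ = n * D ^ 2 := by simp
  calc _ = ∑ t ∈ Icc 1 T, ((n : ℝ)⁻¹ * ∑ i, ((n : ℝ)⁻¹ * ∑ j, f j t (x i t)) -
          (n : ℝ)⁻¹ * ∑ j, f j t xstar) := by rw [mul_sum, sum_sub_distrib]
    _ ≤ T * (L * δ + η * L ^ 2 / 2) + (∑ i, ‖x i 1 - xstar‖ ^ 2) / (2 * η * n) :=
        sum_Icc_le_of_le_add_sub_div (u := fun t => ∑ j, ‖x j t - xstar‖ ^ 2)
          (v := fun t => ∑ j, ‖y j (t + 1) - xstar‖ ^ 2) (by positivity)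
          (fun t ht => avg_regret_le hn hX hη hL (hx t ht) hxstar (fun j => hlip j t ht)
            (fun j => hsub j t ht) (fun j => hg j t ht) (fun j => hy j t ht) (hδ t ht))
          hmix (by positivity)
    _ ≤ T * (L * δ + η * L ^ 2 / 2) + D ^ 2 / (2 * η) := by
        have hn' : (n : ℝ) ≠ 0 := by positivity
        have h : (∑ i, ‖x i 1 - xstar‖ ^ 2) / (2 * η * n) ≤ D ^ 2 / (2 * η) :=
          (div_le_div_of_nonneg_right hdist₁ (by positivity)).trans_eq (by field_simp)
        linarith

end InnerProduct

theorem stmt5_general {H : Type*} [NormedAddCommGroup H] [InnerProductSpace ℝ H]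
    (X : Set H) (hXcv : Convex ℝ X)
    (D : ℝ) (hdiam : ∀ a ∈ X, ∀ b ∈ X, ‖a - b‖ ≤ D)
    {n : ℕ} (hn : 1 ≤ n) (W : Matrix (Fin n) (Fin n) ℝ)
    (hnonneg : ∀ i j, 0 ≤ W i j)
    (hrow : ∀ i, ∑ j, W i j = 1)
    (hcol : ∀ j, ∑ i, W i j = 1)
    (hσ : sigma2 W < 1)
    (ρ : ℝ) (hρ : ρ = 1 - (1 - sigma2 W) / 4)
    (T : ℕ) (η L : ℝ) (hη : 0 < η) (hL : 0 ≤ L)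
    (f : Fin n → ℕ → H → ℝ)
    (hlip : ∀ i, ∀ t ∈ Finset.Icc 1 T, ∀ a ∈ X, ∀ b ∈ X,
      |f i t a - f i t b| ≤ L * ‖a - b‖)
    (x₁ : H) (hx₁ : x₁ ∈ X)
    (x y : Fin n → ℕ → H) (g : Fin n → ℕ → H)
    (hinit : ∀ i, x i 1 = x₁)
    -- `g i t` is a subgradient of `f i t` at `x i t` on `X`, of norm at most `L`
    (hsub : ∀ i, ∀ t ∈ Finset.Icc 1 T, ∀ w ∈ X,
      f i t w ≥ f i t (x i t) + ⟪g i t, w - x i t⟫)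
    (hg : ∀ i, ∀ t ∈ Finset.Icc 1 T, ‖g i t‖ ≤ L)
    -- `y i (t+1)` is the metric projection of `x i t - η • g i t` onto `X`
    (hproj : ∀ i, ∀ t ∈ Finset.Icc 1 T, y i (t + 1) ∈ X ∧
      ∀ w ∈ X, ‖y i (t + 1) - (x i t - η • g i t)‖ ≤ ‖w - (x i t - η • g i t)‖)
    (hcons : ∀ i, ∀ t ∈ Finset.Icc 1 T,
      x i (t + 1) = y i (t + 1) + (2 : ℝ)⁻¹ • ∑ j, W i j • (y j (t + 1) - y i (t + 1))) :
    ∀ xstar ∈ X,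
      (n : ℝ)⁻¹ * ∑ t ∈ Finset.Icc 1 T, ∑ i, ((n : ℝ)⁻¹ * ∑ j, f j t (x i t)) -
          ∑ t ∈ Finset.Icc 1 T, ((n : ℝ)⁻¹ * ∑ j, f j t xstar) ≤
        D ^ 2 / (2 * η) + η * T * L ^ 2 * (4 * Real.sqrt n / (1 - ρ) + 1 / 2) := by
  intro xstar hxstar
  have hM := consensusMatrix_mem_doublyStochastic
    (mem_doublyStochastic_iff_sum.2 ⟨hnonneg, hrow, hcol⟩)
  have hcons' (i t) (ht : t ∈ Icc 1 T) :
      x i (t + 1) = ∑ j, consensusMatrix W i j • y j (t + 1) :=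
    (hcons i t ht).trans (add_inv_two_smul_sum_eq_sum_consensusMatrix (hrow i) fun j => y j (t + 1))
  have hy (i t) (ht : t ∈ Icc 1 T) :
      y i (t + 1) ∈ X ∧ IsMinOn (fun w => ‖w - (x i t - η • g i t)‖) X (y i (t + 1)) :=
    ⟨(hproj i t ht).1, isMinOn_iff.2 (hproj i t ht).2⟩
  have hx₁' (i) : x i 1 ∈ X := hinit i ▸ hx₁
  have hx := iterate_mem hXcv hM hx₁' (fun i t ht => (hy i t ht).1) hcons'
  have hρ1 : ρ < 1 := by rw [hρ]; linarith
  have hMρ : ‖consensusMatrix W - averagingMatrix n‖ ≤ ρ :=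
    (norm_consensusMatrix_sub_averagingMatrix_le (by omega) W).trans (by rw [hρ]; linarith)
  have hdev := exists_sqrt_sum_norm_sub_sq_le (by positivity) hρ1 hMρ
    (sum_row_of_mem_doublyStochastic hM) hinit
    (fun i t ht => norm_sub_le_of_isMinOn_sub_smul hXcv hη.le (hy i t ht).1 (hy i t ht).2
      (hx t ht i) (hg i t ht)) hcons'
  refine (regret_le_of_disagreement_le hn hXcv hdiam hη hL hxstar hx₁' hx hlip hsub hg hy
    (fun t ht => (hdev t ht).elim fun _ hc => norm_sub_le_of_sqrt_sum_norm_sub_sq_le hc)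
    (fun t ht => by simpa only [hcons' _ t ht] using sum_norm_sum_smul_sub_sq_le hM _ _)).trans ?_
  have hK : 0 ≤ η * T * L ^ 2 * (√n / (1 - ρ)) :=
    mul_nonneg (by positivity) (div_nonneg (by positivity) (by linarith))
  have e : T * (L * (2 * (√n * (η * L) / (1 - ρ))) + η * L ^ 2 / 2) =
      η * T * L ^ 2 * (4 * √n / (1 - ρ) + 1 / 2) - 2 * (η * T * L ^ 2 * (√n / (1 - ρ))) := by
    ring
  linarith

theorem stmt5 {H : Type*} [NormedAddCommGroup H] [InnerProductSpace ℝ H] [CompleteSpace H]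
    (X : Set H) (hXne : X.Nonempty) (hXcl : IsClosed X) (hXcv : Convex ℝ X)
    (D : ℝ) (hdiam : ∀ a ∈ X, ∀ b ∈ X, ‖a - b‖ ≤ D)
    {n : ℕ} (hn : 1 ≤ n) (W : Matrix (Fin n) (Fin n) ℝ)
    (hsymm : W.IsSymm)
    (hnonneg : ∀ i j, 0 ≤ W i j)
    (hrow : ∀ i, ∑ j, W i j = 1)
    (hcol : ∀ j, ∑ i, W i j = 1)
    (hσ : sigma2 W < 1)
    (ρ : ℝ) (hρ : ρ = 1 - (1 - sigma2 W) / 4)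
    (T : ℕ) (hT : 1 ≤ T) (η L : ℝ) (hη : 0 < η) (hL : 0 ≤ L)
    (f : Fin n → ℕ → H → ℝ)
    (hconv : ∀ i, ∀ t ∈ Finset.Icc 1 T, ConvexOn ℝ X (f i t))
    (hlip : ∀ i, ∀ t ∈ Finset.Icc 1 T, ∀ a ∈ X, ∀ b ∈ X,
      |f i t a - f i t b| ≤ L * ‖a - b‖)
    (x₁ : H) (hx₁ : x₁ ∈ X)
    (x y : Fin n → ℕ → H) (g : Fin n → ℕ → H)
    (hinit : ∀ i, x i 1 = x₁)
    -- `g i t` is a subgradient of `f i t` at `x i t` on `X`, of norm at most `L`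
    (hsub : ∀ i, ∀ t ∈ Finset.Icc 1 T, ∀ w ∈ X,
      f i t w ≥ f i t (x i t) + ⟪g i t, w - x i t⟫)
    (hg : ∀ i, ∀ t ∈ Finset.Icc 1 T, ‖g i t‖ ≤ L)
    -- `y i (t+1)` is the metric projection of `x i t - η • g i t` onto `X`
    (hproj : ∀ i, ∀ t ∈ Finset.Icc 1 T, y i (t + 1) ∈ X ∧
      ∀ w ∈ X, ‖y i (t + 1) - (x i t - η • g i t)‖ ≤ ‖w - (x i t - η • g i t)‖)
    (hcons : ∀ i, ∀ t ∈ Finset.Icc 1 T,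
      x i (t + 1) = y i (t + 1) + (2 : ℝ)⁻¹ • ∑ j, W i j • (y j (t + 1) - y i (t + 1))) :
    ∀ xstar ∈ X,
      (n : ℝ)⁻¹ * ∑ t ∈ Finset.Icc 1 T, ∑ i, ((n : ℝ)⁻¹ * ∑ j, f j t (x i t)) -
          ∑ t ∈ Finset.Icc 1 T, ((n : ℝ)⁻¹ * ∑ j, f j t xstar) ≤
        D ^ 2 / (2 * η) + η * T * L ^ 2 * (4 * Real.sqrt n / (1 - ρ) + 1 / 2) :=
  stmt5_general X hXcv D hdiam hn W hnonneg hrow hcol hσ ρ hρ T η L hη hL f hlip x₁ hx₁ x y g hinit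
    hsub hg hproj hcons
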